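/- Let P be a two-color grid poset that decomposes as P = P1 ◁ P2 ◁ ... ◁ Pk, and let M be a 2×2 integer matrix with rows M_α and M_β. If for each i = 1,...,k the edge-colored lattice J_color(P_i) satisfies the structure condition for M, then J_color(P) satisfies the structure condition for M. -/

import Mathlib

/-- The two colors (simple-root labels) `α` and `β`. -/
inductive TwoColor : Type
  | alpha : TwoColor
  | beta : TwoColor
  deriving DecidableEq

/-- Lengths of paths of `r`-edges ending at `t`. -/
def chainsEndingAt {V : Type*} (r : V → V → Prop) (t : V) : Set ℕ :=
  {n : ℕ | ∃ c : ℕ → V, c n = t ∧ ∀ i : ℕ, i < n → r (c i) (c (i + 1))}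

/-- Lengths of paths of `r`-edges starting at `t`. -/
def chainsStartingAt {V : Type*} (r : V → V → Prop) (t : V) : Set ℕ :=
  {n : ℕ | ∃ c : ℕ → V, c 0 = t ∧ ∀ i : ℕ, i < n → r (c i) (c (i + 1))}

/-- `ρ`: the maximum number of edges in a chain of `r`-edges ending at `t`. -/
noncomputable def rhoOf {V : Type*} (r : V → V → Prop) (t : V) : ℕ :=
  sSup (chainsEndingAt r t)

/-- `δ`: the maximum number of edges in a chain of `r`-edges starting at `t`. -/
noncomputable def deltaOf {V : Type*} (r : V → V → Prop) (t : V) : ℕ :=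
  sSup (chainsStartingAt r t)

/-- `l = ρ + δ`. -/
noncomputable def lenOf {V : Type*} (r : V → V → Prop) (t : V) : ℕ :=
  rhoOf r t + deltaOf r t

/-- The weight `wt(t) = (ρ_α(t) − δ_α(t), ρ_β(t) − δ_β(t))` of an element of an
edge-colored poset whose (colored) covering relations are given by `cov`. -/
noncomputable def wtOf {V : Type*} (cov : TwoColor → V → V → Prop) (t : V) : ℤ × ℤ :=
  ((rhoOf (cov TwoColor.alpha) t : ℤ) - (deltaOf (cov TwoColor.alpha) t : ℤ),
   (rhoOf (cov TwoColor.beta) t : ℤ) - (deltaOf (cov TwoColor.beta) t : ℤ))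

/-- The structure condition for a `2 × 2` integer matrix `M` (given by its rows
`M γ` for `γ ∈ {α, β}`): along any covering edge of color `γ`, the weight changes by `M γ`. -/
def StructureCondition {V : Type*} (cov : TwoColor → V → V → Prop)
    (M : TwoColor → ℤ × ℤ) : Prop :=
  ∀ (γ : TwoColor) (s t : V), cov γ s t → wtOf cov t = wtOf cov s + M γ

/-- The elements of the distributive lattice `J(P)`: order ideals (lower sets) of `P`. -/
abbrev OrderIdeal (V : Type*) [PartialOrder V] : Type _ := {I : Set V // IsLowerSet I}

/-- The colored covering relation of `J_color(P)` for a vertex-colored poset `P`: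
`s ⋖ t` with color `γ` when `t ∖ s` is a single vertex of color `γ`. -/
def idealCov {V : Type*} [PartialOrder V] (vcolor : V → TwoColor) (γ : TwoColor)
    (s t : OrderIdeal V) : Prop :=
  ∃ u : V, vcolor u = γ ∧ u ∉ s.1 ∧ t.1 = insert u s.1

/-- Two vertices are in the same connected component of the Hasse diagram of a
poset when they are joined by a path of covering edges (in either direction). -/
def HasseConnected {V : Type*} [PartialOrder V] (u v : V) : Prop :=
  Relation.ReflTransGen (fun x y : V => x ⋖ y ∨ y ⋖ x) u v

/-- `chain : P → {1, …, m}` is a chain function making the finite poset `P` a grid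
poset: each fiber of `chain` is a chain of `P`, and along any covering relation
`u ⋖ v` either `chain u = chain v` or `chain u = chain v + 1`. -/
def IsGridPoset {V : Type*} [PartialOrder V] (m : ℕ) (chain : V → ℕ) : Prop :=
  1 ≤ m ∧ (∀ v : V, 1 ≤ chain v ∧ chain v ≤ m) ∧
    (∀ i : ℕ, IsChain (· ≤ ·) {v : V | chain v = i}) ∧
    (∀ u v : V, u ⋖ v → chain u = chain v ∨ chain u = chain v + 1)

/-- `color` is a two-color function for the grid poset `(P, chain)`: it is constant
on the fibers of `chain`, and vertices in the same connected component of the Hasse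
diagram lying on adjacent chains get different colors. -/
def IsTwoColoring {V : Type*} [PartialOrder V] (chain : V → ℕ) (color : V → TwoColor) : Prop :=
  (∀ u v : V, chain u = chain v → color u = color v) ∧
  (∀ u v : V, HasseConnected u v → chain u = chain v + 1 → color u ≠ color v)

/-- `idx` exhibits the decomposition `P = P₁ ◁ P₂ ◁ ⋯ ◁ P_k`, where
`P_i = idx⁻¹(i)`: each prefix is an order ideal of the remaining poset
(equivalently, `idx` is monotone), each piece is nonempty, and whenever `u` is a
maximal (resp. minimal) element of the piece `P_i` and `v` is a maximal
(resp. minimal) element of the union of the later pieces, `chain u ≤ chain v`. -/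
def IsDecomposition {V : Type*} [PartialOrder V] {k : ℕ} (chain : V → ℕ)
    (idx : V → Fin k) : Prop :=
  (∀ u v : V, u ≤ v → idx u ≤ idx v) ∧
  (∀ i : Fin k, ∃ v : V, idx v = i) ∧
  (∀ (i : Fin k) (u v : V), idx u = i → i < idx v →
      (∀ w : V, idx w = i → ¬u < w) → (∀ w : V, i < idx w → ¬v < w) → chain u ≤ chain v) ∧
  (∀ (i : Fin k) (u v : V), idx u = i → i < idx v →
      (∀ w : V, idx w = i → ¬w < u) → (∀ w : V, i < idx w → ¬w < v) → chain u ≤ chain v)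

/-- The restriction `s ∩ P_i` of an order ideal `s` of `P` to the piece
`P_i = idx⁻¹(i)`, as an order ideal of the subposet `P_i`. -/
def restrictIdeal {V : Type*} [PartialOrder V] {k : ℕ} (idx : V → Fin k)
    (s : OrderIdeal V) (i : Fin k) : OrderIdeal {v : V // idx v = i} :=
  ⟨{x : {v : V // idx v = i} | (x : V) ∈ s.1}, fun _ _ hba ha => s.2 hba ha⟩

/-- The restriction of the vertex coloring to the piece `P_i = idx⁻¹(i)`. -/
def subColor {V : Type*} {k : ℕ} (idx : V → Fin k) (color : V → TwoColor) (i : Fin k)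
    (x : {v : V // idx v = i}) : TwoColor :=
  color x.1

/-!
In `J(P)` for a two-color grid poset, `ρ_γ(s)` is the number of `γ`-colored `u ∈ s` such that
every element of `s` above `u` lies on the chain of `u`: removing these elements top-down is a
longest `γ`-chain ending at `s`, and each `γ`-covering adds exactly one of them. Dually `δ_γ(s)`
counts the `γ`-colored `u ∉ s` all of whose predecessors outside `s` lie on the chain of `u`.
For a decomposition `P = P₁ ◁ ⋯ ◁ P_k`, the chain inequalities between maximal (resp. minimal)
elements of the pieces make these conditions checkable inside the piece containing `u`, so
`wt(s) = ∑ᵢ wtᵢ(s ∩ Pᵢ)`. A covering `s ⋖ t` of `J(P)` changes only the piece containing the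
added element, where it is a covering of `J(Pᵢ)` of the same color.
-/

section RelationChains

variable {α : Type*} (r : α → α → Prop)

theorem chainsStartingAt_eq_chainsEndingAt_flip (t : α) :
    chainsStartingAt r t = chainsEndingAt (flip r) t := by
  ext n
  constructor
  · rintro ⟨c, hc, hstep⟩
    refine ⟨fun i => c (n - i), by simpa using hc, fun i hi => ?_⟩
    have hsucc : n - i = n - (i + 1) + 1 := by omega
    simpa only [flip, hsucc] using hstep (n - (i + 1)) (by omega)
  · rintro ⟨c, hc, hstep⟩
    refine ⟨fun i => c (n - i), by simpa using hc, fun i hi => ?_⟩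
    have hsucc : n - i = n - (i + 1) + 1 := by omega
    simpa only [flip, hsucc] using hstep (n - (i + 1)) (by omega)

theorem deltaOf_eq_rhoOf_flip (t : α) : deltaOf r t = rhoOf (flip r) t := by
  rw [deltaOf, rhoOf, chainsStartingAt_eq_chainsEndingAt_flip]

variable {r}

theorem zero_mem_chainsEndingAt (t : α) : 0 ∈ chainsEndingAt r t :=
  ⟨fun _ => t, rfl, fun _ hi => absurd hi (Nat.not_lt_zero _)⟩

theorem succ_mem_chainsEndingAt {n : ℕ} {s t : α} (hn : n ∈ chainsEndingAt r s) (hst : r s t) :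
    n + 1 ∈ chainsEndingAt r t := by
  obtain ⟨c, hc, hstep⟩ := hn
  refine ⟨Function.update c (n + 1) t, by simp, fun i hi => ?_⟩
  rcases Nat.lt_succ_iff_lt_or_eq.1 hi with hi | rfl
  · simpa [Function.update_of_ne (show i ≠ n + 1 by omega),
      Function.update_of_ne (show i + 1 ≠ n + 1 by omega)] using hstep i hi
  · simpa [hc] using hst

theorem rhoOf_eq_of_step (f : α → ℕ) (hstep : ∀ s t, r s t → f t = f s + 1)
    (hex : ∀ t, 0 < f t → ∃ s, r s t) (t : α) : rhoOf r t = f t := by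
  have hmem : ∀ n t, f t = n → n ∈ chainsEndingAt r t := by
    intro n
    induction n with
    | zero => exact fun t _ => zero_mem_chainsEndingAt t
    | succ n ih =>
      intro t ht
      obtain ⟨s, hst⟩ := hex t (by omega)
      exact succ_mem_chainsEndingAt (ih s (by have := hstep s t hst; omega)) hst
  have hle : ∀ n ∈ chainsEndingAt r t, n ≤ f t := by
    rintro n ⟨c, rfl, hstep'⟩
    have hgrow : ∀ i ≤ n, f (c 0) + i = f (c i) := by
      intro i
      induction i with
      | zero => simp
      | succ i ih => intro hi; rw [hstep _ _ (hstep' i hi), ← ih (by omega)]; ring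
    have := hgrow n le_rfl
    omega
  exact IsGreatest.csSup_eq ⟨hmem _ t rfl, hle⟩

end RelationChains

section RemovableSets

open OrderDual

variable {V : Type*} [PartialOrder V]

/-- The two properties of a two-color grid poset on which the formulas for `ρ` and `δ` rest. -/
def IsChainColoring (chain : V → ℕ) (color : V → TwoColor) : Prop :=
  (∀ u v, chain u = chain v → color u = color v) ∧
    ∀ u v, u ⋖ v → color u = color v → chain u = chain v

variable (chain : V → ℕ) (color : V → TwoColor) (γ : TwoColor)

def removableSet (s : Set V) : Set V :=
  {u | u ∈ s ∧ color u = γ ∧ ∀ x ∈ s, u < x → chain x = chain u}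

def addableSet (s : Set V) : Set V :=
  {u | u ∉ s ∧ color u = γ ∧ ∀ x ∉ s, x < u → chain x = chain u}

theorem addableSet_eq_removableSet_dual (s : Set V) :
    addableSet chain color γ s =
      toDual ⁻¹' removableSet (chain ∘ ofDual) (color ∘ ofDual) γ (ofDual ⁻¹' sᶜ) :=
  rfl

variable {chain color γ}

theorem IsChainColoring.dual (h : IsChainColoring chain color) :
    IsChainColoring (V := Vᵒᵈ) (chain ∘ ofDual) (color ∘ ofDual) :=
  ⟨fun _ _ => h.1 _ _, fun _ _ huv hc => (h.2 _ _ huv.ofDual hc.symm).symm⟩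

variable [Finite V] (hc : IsChainColoring chain color)
include hc

theorem removableSet_insert {s : Set V} {u : V} (hs : IsLowerSet s)
    (hins : IsLowerSet (insert u s)) (hus : u ∉ s) (hu : color u = γ) :
    removableSet chain color γ (insert u s) = insert u (removableSet chain color γ s) := by
  ext v
  constructor
  · rintro ⟨hv, hvγ, hvtop⟩
    rcases hv with rfl | hv
    · exact Set.mem_insert v _
    · exact Or.inr ⟨hv, hvγ, fun x hx => hvtop x (Or.inr hx)⟩
  · rintro (rfl | ⟨hv, hvγ, hvtop⟩)
    · refine ⟨Set.mem_insert v s, hu, ?_⟩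
      rintro x (rfl | hx) hvx
      · exact absurd hvx (lt_irrefl x)
      · exact absurd (hs hvx.le hx) hus
    · refine ⟨Or.inr hv, hvγ, ?_⟩
      rintro x (rfl | hx) hvx
      · obtain ⟨z, hvz, hzx⟩ := exists_le_covBy_of_lt hvx
        have hzs : z ∈ s := (hins hzx.le (Set.mem_insert x s)).resolve_left hzx.ne
        have hzv : chain z = chain v := hvz.eq_or_lt.elim (fun h => h ▸ rfl) (hvtop z hzs)
        exact (hc.2 z x hzx ((hc.1 z v hzv).trans (hvγ.trans hu.symm))).symm.trans hzv
      · exact hvtop x hx hvx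

theorem addableSet_insert {s : Set V} {u : V} (hs : IsLowerSet s)
    (hins : IsLowerSet (insert u s)) (hus : u ∉ s) (hu : color u = γ) :
    addableSet chain color γ s = insert u (addableSet chain color γ (insert u s)) := by
  have hcompl : ofDual ⁻¹' sᶜ = insert (toDual u) (ofDual ⁻¹' (insert u s)ᶜ) := by
    ext v
    rcases eq_or_ne (ofDual v) u with rfl | hv
    · simp [hus]
    · have hv' : v ≠ toDual u := fun h => hv (congrArg ofDual h)
      simp [hv, hv']
  rw [addableSet_eq_removableSet_dual, addableSet_eq_removableSet_dual, hcompl,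
    removableSet_insert (u := toDual u) hc.dual hins.compl.toDual (hcompl ▸ hs.compl.toDual)
      (by simp) hu]
  rfl

theorem exists_maximal_mem_removableSet {s : Set V} {u : V}
    (hu : u ∈ removableSet chain color γ s) :
    ∃ x ∈ removableSet chain color γ s, ∀ y ∈ s, ¬x < y := by
  obtain ⟨x, hux, hxmax⟩ := (Set.toFinite s).exists_le_maximal hu.1
  have hxu : chain x = chain u := hux.eq_or_lt.elim (fun h => h ▸ rfl) (hu.2.2 x hxmax.1)
  have hxtop : ∀ y ∈ s, ¬x < y := fun y hy hxy => hxy.not_ge (hxmax.2 hy hxy.le)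
  exact ⟨x, ⟨hxmax.1, (hc.1 x u hxu).trans hu.2.1, fun y hy hxy => absurd hxy (hxtop y hy)⟩,
    hxtop⟩

theorem exists_minimal_mem_addableSet {s : Set V} {u : V}
    (hu : u ∈ addableSet chain color γ s) :
    ∃ x ∈ addableSet chain color γ s, ∀ y ∉ s, ¬y < x :=
  exists_maximal_mem_removableSet hc.dual hu

theorem rhoOf_idealCov_eq_ncard_removableSet (s : OrderIdeal V) :
    rhoOf (idealCov color γ) s = (removableSet chain color γ s.1).ncard := by
  refine rhoOf_eq_of_step (fun s : OrderIdeal V => (removableSet chain color γ s.1).ncard)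
    (fun s t hst => ?_) (fun t ht => ?_) s
  · obtain ⟨u, hu, hus, ht⟩ := hst
    rw [ht, removableSet_insert hc s.2 (ht ▸ t.2) hus hu,
      Set.ncard_insert_of_notMem (fun h => hus h.1)]
  · obtain ⟨u, hu⟩ := (Set.ncard_pos (Set.toFinite _)).1 ht
    obtain ⟨x, hx, hxtop⟩ := exists_maximal_mem_removableSet hc hu
    refine ⟨⟨t.1 \ {x}, t.2.erase fun y hy hxy => ?_⟩, x, hx.2.1, fun h => h.2 rfl, ?_⟩
    · exact hxy.eq_or_lt.elim Eq.symm fun h => absurd h (hxtop y hy)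
    · simp [Set.insert_eq_of_mem hx.1]

theorem deltaOf_idealCov_eq_ncard_addableSet (s : OrderIdeal V) :
    deltaOf (idealCov color γ) s = (addableSet chain color γ s.1).ncard := by
  rw [deltaOf_eq_rhoOf_flip]
  refine rhoOf_eq_of_step (fun s : OrderIdeal V => (addableSet chain color γ s.1).ncard)
    (fun t s hst => ?_) (fun s hs => ?_) s
  · obtain ⟨u, hu, hus, ht⟩ := hst
    rw [ht, addableSet_insert hc s.2 (ht ▸ t.2) hus hu,
      Set.ncard_insert_of_notMem (fun h => h.1 (Set.mem_insert u s.1))]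
  · obtain ⟨u, hu⟩ := (Set.ncard_pos (Set.toFinite _)).1 hs
    obtain ⟨x, hx, hxbot⟩ := exists_minimal_mem_addableSet hc hu
    refine ⟨⟨insert x s.1, ?_⟩, x, hx.2.1, hx.1, rfl⟩
    rintro a b hba (rfl | ha)
    · by_contra hb
      exact hxbot b (fun h => hb (Or.inr h)) (hba.lt_of_ne fun h => hb (h ▸ Or.inl rfl))
    · exact Or.inr (s.2 hba ha)

end RemovableSets

section GridPoset

variable {V : Type*} [PartialOrder V] {m : ℕ} {chain : V → ℕ} (hgrid : IsGridPoset m chain)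
include hgrid

theorem IsGridPoset.le_total_of_chain_eq {u v : V} (h : chain u = chain v) : u ≤ v ∨ v ≤ u :=
  (hgrid.2.2.1 (chain v)).total h rfl

theorem IsTwoColoring.isChainColoring {color : V → TwoColor}
    (hcolor : IsTwoColoring chain color) : IsChainColoring chain color :=
  ⟨hcolor.1, fun u v huv hc => (hgrid.2.2.2 u v huv).resolve_right fun h =>
    hcolor.2 u v (Relation.ReflTransGen.single (Or.inl huv)) h hc⟩

variable [Finite V]

theorem IsGridPoset.antitone : Antitone chain := by
  have : LocallyFiniteOrder V := LocallyFiniteOrder.ofFiniteIcc fun _ _ => Set.toFinite _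
  exact (antitone_iff_forall_covBy chain).2 fun a b hab => by
    rcases hgrid.2.2.2 a b hab with h | h <;> omega

theorem IsGridPoset.exists_chain_eq {u a : V} (hua : u ≤ a) {g : ℕ} (hag : chain a ≤ g)
    (hgu : g ≤ chain u) : ∃ e, u ≤ e ∧ e ≤ a ∧ chain e = g := by
  have : LocallyFiniteOrder V := LocallyFiniteOrder.ofFiniteIcc fun _ _ => Set.toFinite _
  induction le_iff_reflTransGen_covBy.1 hua using Relation.ReflTransGen.head_induction_on with
  | refl => exact ⟨a, le_rfl, le_rfl, le_antisymm hag hgu⟩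
  | @head u z huz hza ih =>
    have hza := le_iff_reflTransGen_covBy.2 hza
    rcases hgu.eq_or_lt with rfl | hlt
    · exact ⟨u, le_rfl, huz.le.trans hza, rfl⟩
    · obtain ⟨e, hze, hea, he⟩ := ih hza (by rcases hgrid.2.2.2 u z huz with h | h <;> omega)
      exact ⟨e, huz.le.trans hze, hea, he⟩

end GridPoset

section Decomposition

variable {V : Type*} [PartialOrder V] {k : ℕ} {chain : V → ℕ} {idx : V → Fin k}

theorem IsDecomposition.monotone (hdec : IsDecomposition chain idx) : Monotone idx :=
  fun _ _ h => hdec.1 _ _ h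

theorem CovBy.subtype_val {α : Type*} [Preorder α] {p : α → Prop}
    (hp : Set.OrdConnected {a | p a}) {x y : Subtype p} (h : x ⋖ y) : (x : α) ⋖ y :=
  h.image (OrderEmbedding.subtype p) (by simpa using hp)

theorem IsChainColoring.subtype {p : V → Prop} (hp : Set.OrdConnected {a | p a})
    {color : V → TwoColor} (hc : IsChainColoring chain color) :
    IsChainColoring (fun x : Subtype p => chain x) (fun x => color x) :=
  ⟨fun _ _ h => hc.1 _ _ h, fun _ _ huv h => hc.2 _ _ (huv.subtype_val hp) h⟩

theorem IsChainColoring.subColor {color : V → TwoColor} (hc : IsChainColoring chain color)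
    (hidx : Monotone idx) (j : Fin k) :
    IsChainColoring (fun x : {v // idx v = j} => chain x) (subColor idx color j) :=
  hc.subtype (Set.ordConnected_singleton.preimage_mono hidx)

variable [Finite V] {m : ℕ} (hgrid : IsGridPoset m chain) (hdec : IsDecomposition chain idx)
include hgrid hdec

theorem IsDecomposition.exists_le_lt_chain_eq {u y : V} (huy : u < y) (hidx : idx u < idx y) :
    ∃ a, idx a = idx u ∧ u ≤ a ∧ a < y ∧ chain a = chain y := by
  obtain ⟨v, hyv, hvmax⟩ := (Set.toFinite Set.univ).exists_le_maximal (Set.mem_univ y)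
  obtain ⟨a, hua, hamax⟩ :=
    (Set.toFinite {w | idx w = idx u}).exists_le_maximal (a := u) rfl
  have hav : chain a ≤ chain v := hdec.2.2.1 (idx u) a v hamax.1 (hidx.trans_le (hdec.monotone hyv))
    (fun w hw haw => haw.not_ge (hamax.2 hw haw.le))
    (fun w _ hvw => hvw.not_ge (hvmax.2 trivial hvw.le))
  obtain ⟨e, hue, hea, he⟩ := hgrid.exists_chain_eq hua (hav.trans (hgrid.antitone hyv))
    (hgrid.antitone huy.le)
  have hidxe : idx e = idx u :=
    le_antisymm (hamax.1 ▸ hdec.monotone hea) (hdec.monotone hue)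
  rcases hgrid.le_total_of_chain_eq he with hey | hye
  · exact ⟨e, hidxe, hue, hey.lt_of_ne (by rintro rfl; exact hidx.ne' hidxe), he⟩
  · exact absurd (hdec.monotone hye) (hidxe ▸ hidx).not_ge

theorem IsDecomposition.exists_lt_le_chain_eq {x u : V} (hxu : x < u) (hidx : idx x < idx u) :
    ∃ e, x < e ∧ e ≤ u ∧ chain e = chain x := by
  obtain ⟨w, hwx, hwmin⟩ :=
    (Set.toFinite {w | idx w = idx x}).exists_le_minimal (a := x) rfl
  obtain ⟨c, hcu, hcmin⟩ := (Set.toFinite {w | idx x < idx w}).exists_le_minimal hidx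
  have hwc : chain w ≤ chain c := hdec.2.2.2 (idx x) w c hwmin.1 hcmin.1
    (fun v hv hvw => hvw.not_ge (hwmin.2 hv hvw.le))
    (fun v hv hvc => hvc.not_ge (hcmin.2 hv hvc.le))
  obtain ⟨e, hce, heu, he⟩ := hgrid.exists_chain_eq hcu (hgrid.antitone hxu.le)
    ((hgrid.antitone hwx).trans hwc)
  have hidxe : idx x < idx e := hcmin.1.trans_le (hdec.monotone hce)
  rcases hgrid.le_total_of_chain_eq he with hex | hxe
  · exact absurd (hdec.monotone hex) hidxe.not_ge
  · exact ⟨e, hxe.lt_of_ne (by rintro rfl; exact lt_irrefl _ hidxe), heu, he⟩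

theorem mem_removableSet_iff_of_decomposition {color : V → TwoColor} {γ : TwoColor} {s : Set V}
    (hs : IsLowerSet s) {u : V} :
    u ∈ removableSet chain color γ s ↔
      u ∈ s ∧ color u = γ ∧ ∀ x, idx x = idx u → x ∈ s → u < x → chain x = chain u := by
  refine ⟨fun ⟨hu, hγ, htop⟩ => ⟨hu, hγ, fun x _ => htop x⟩, fun ⟨hu, hγ, H⟩ => ⟨hu, hγ, ?_⟩⟩
  intro x hx hux
  rcases (hdec.monotone hux.le).eq_or_lt with hi | hi
  · exact H x hi.symm hx hux
  · obtain ⟨a, hai, hua, hax, ha⟩ := hdec.exists_le_lt_chain_eq hgrid hux hi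
    rcases hua.eq_or_lt with rfl | hua
    · exact ha.symm
    · exact ha ▸ H a hai (hs hax.le hx) hua

theorem mem_addableSet_iff_of_decomposition {color : V → TwoColor} {γ : TwoColor} {s : Set V}
    (hs : IsLowerSet s) {u : V} :
    u ∈ addableSet chain color γ s ↔
      u ∉ s ∧ color u = γ ∧ ∀ x, idx x = idx u → x ∉ s → x < u → chain x = chain u := by
  refine ⟨fun ⟨hu, hγ, hbot⟩ => ⟨hu, hγ, fun x _ => hbot x⟩, fun ⟨hu, hγ, H⟩ => ⟨hu, hγ, ?_⟩⟩
  -- A step down may land in an intermediate piece, hence the induction upwards on `x`.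
  intro x
  induction x using WellFoundedGT.induction with
  | _ x ih =>
    intro hx hxu
    rcases (hdec.monotone hxu.le).eq_or_lt with hi | hi
    · exact H x hi hx hxu
    · obtain ⟨e, hxe, heu, he⟩ := hdec.exists_lt_le_chain_eq hgrid hxu hi
      rcases heu.eq_or_lt with rfl | heu
      · exact he.symm
      · exact he ▸ ih e hxe (fun h => hx (hs hxe.le h)) heu

end Decomposition

theorem Set.ncard_eq_sum_ncard_preimage_val {α ι : Type*} [Finite α] [Fintype ι] (f : α → ι)
    (A : Set α) : A.ncard = ∑ j, (Subtype.val ⁻¹' A : Set {a // f a = j}).ncard := by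
  have hpiece : ∀ j,
      (Subtype.val ⁻¹' A : Set {a // f a = j}).ncard = (A ∩ {a | f a = j}).ncard := by
    intro j
    rw [← Set.ncard_image_of_injective _ Subtype.val_injective, Set.image_preimage_eq_inter_range,
      Subtype.range_coe_subtype]
  simp_rw [hpiece]
  rw [← finsum_eq_sum_of_fintype, ← Set.ncard_iUnion_of_finite (fun _ => Set.toFinite _),
    ← Set.inter_iUnion]
  · simp only [Set.iUnion_ofPred, exists_eq', Set.ofPred_true, Set.inter_univ]
  · exact fun i j hij => (Set.disjoint_left.2 fun a (hi : f a = i) hj => hij (hi ▸ hj)).mono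
      Set.inter_subset_right Set.inter_subset_right

section Pieces

variable {V : Type*} [PartialOrder V] [Finite V] {m k : ℕ} {chain : V → ℕ}
  {color : V → TwoColor} {idx : V → Fin k} (hgrid : IsGridPoset m chain)
  (hdec : IsDecomposition chain idx)
include hgrid hdec

theorem preimage_val_removableSet (γ : TwoColor) (s : OrderIdeal V) (j : Fin k) :
    Subtype.val ⁻¹' removableSet chain color γ s.1 =
      removableSet (fun x : {v // idx v = j} => chain x) (subColor idx color j) γ
        (restrictIdeal idx s j).1 := by
  ext ⟨u, rfl⟩
  rw [Set.mem_preimage, mem_removableSet_iff_of_decomposition hgrid hdec s.2]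
  simp [removableSet, restrictIdeal, subColor]

theorem preimage_val_addableSet (γ : TwoColor) (s : OrderIdeal V) (j : Fin k) :
    Subtype.val ⁻¹' addableSet chain color γ s.1 =
      addableSet (fun x : {v // idx v = j} => chain x) (subColor idx color j) γ
        (restrictIdeal idx s j).1 := by
  ext ⟨u, rfl⟩
  rw [Set.mem_preimage, mem_addableSet_iff_of_decomposition hgrid hdec s.2]
  simp [addableSet, restrictIdeal, subColor]

theorem rhoOf_idealCov_eq_sum (hc : IsChainColoring chain color) (γ : TwoColor)
    (s : OrderIdeal V) :
    rhoOf (idealCov color γ) s =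
      ∑ j, rhoOf (idealCov (subColor idx color j) γ) (restrictIdeal idx s j) := by
  rw [rhoOf_idealCov_eq_ncard_removableSet hc, Set.ncard_eq_sum_ncard_preimage_val idx]
  refine Finset.sum_congr rfl fun j _ => ?_
  rw [preimage_val_removableSet hgrid hdec,
    rhoOf_idealCov_eq_ncard_removableSet (hc.subColor hdec.monotone j)]

theorem deltaOf_idealCov_eq_sum (hc : IsChainColoring chain color) (γ : TwoColor)
    (s : OrderIdeal V) :
    deltaOf (idealCov color γ) s =
      ∑ j, deltaOf (idealCov (subColor idx color j) γ) (restrictIdeal idx s j) := by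
  rw [deltaOf_idealCov_eq_ncard_addableSet hc, Set.ncard_eq_sum_ncard_preimage_val idx]
  refine Finset.sum_congr rfl fun j _ => ?_
  rw [preimage_val_addableSet hgrid hdec,
    deltaOf_idealCov_eq_ncard_addableSet (hc.subColor hdec.monotone j)]

theorem wtOf_idealCov_eq_sum (hc : IsChainColoring chain color) (s : OrderIdeal V) :
    wtOf (idealCov color) s =
      ∑ j, wtOf (idealCov (subColor idx color j)) (restrictIdeal idx s j) := by
  ext <;> simp [wtOf, Prod.fst_sum, Prod.snd_sum, rhoOf_idealCov_eq_sum hgrid hdec hc,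
    deltaOf_idealCov_eq_sum hgrid hdec hc]

end Pieces

section Restriction

variable {V : Type*} [PartialOrder V] {k : ℕ} {color : V → TwoColor} {idx : V → Fin k}
  {γ : TwoColor} {s t : OrderIdeal V} {u : V}

theorem idealCov_restrictIdeal (hu : color u = γ) (hus : u ∉ s.1) (ht : t.1 = insert u s.1) :
    idealCov (subColor idx color (idx u)) γ (restrictIdeal idx s (idx u))
      (restrictIdeal idx t (idx u)) := by
  refine ⟨⟨u, rfl⟩, hu, hus, ?_⟩
  ext x
  simp [restrictIdeal, ht, Subtype.ext_iff]

theorem restrictIdeal_eq_of_ne (ht : t.1 = insert u s.1) {j : Fin k} (hj : j ≠ idx u) :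
    restrictIdeal idx t j = restrictIdeal idx s j := by
  ext x
  simp only [restrictIdeal, ht, Set.mem_insert_iff, Set.mem_ofPred_eq, or_iff_right_iff_imp]
  rintro rfl
  exact absurd x.2.symm hj

end Restriction

/-- Lemma 3.1(2): if the two-color grid poset `P` decomposes as
`P = P₁ ◁ P₂ ◁ ⋯ ◁ P_k` and each edge-colored lattice `L_i = J_color(P_i)` satisfies
the structure condition for a `2 × 2` integer matrix `M` (with rows `M_α`, `M_β`),
then `L = J_color(P)` satisfies the structure condition for `M` as well. -/
theorem grid_decomposition_structure_condition {V : Type*} [PartialOrder V] [Fintype V]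
    {m k : ℕ} (chain : V → ℕ) (color : V → TwoColor) (idx : V → Fin k)
    (hgrid : IsGridPoset m chain) (hcolor : IsTwoColoring chain color)
    (hdec : IsDecomposition chain idx) (M : TwoColor → ℤ × ℤ)
    (h : ∀ i : Fin k, StructureCondition (idealCov (subColor idx color i)) M) :
    StructureCondition (idealCov color) M := by
  rintro γ s t ⟨u, hu, hus, ht⟩
  have hc := hcolor.isChainColoring hgrid
  have hrest : ∀ j ∈ Finset.univ.erase (idx u),
      wtOf (idealCov (subColor idx color j)) (restrictIdeal idx t j) =
        wtOf (idealCov (subColor idx color j)) (restrictIdeal idx s j) := fun j hj => by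
    rw [restrictIdeal_eq_of_ne ht (Finset.ne_of_mem_erase hj)]
  rw [wtOf_idealCov_eq_sum hgrid hdec hc, wtOf_idealCov_eq_sum hgrid hdec hc,
    ← Finset.add_sum_erase _ _ (Finset.mem_univ (idx u)),
    ← Finset.add_sum_erase _ _ (Finset.mem_univ (idx u)),
    h (idx u) γ _ _ (idealCov_restrictIdeal hu hus ht), Finset.sum_congr rfl hrest]
  abel
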